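/- The Lie algebra g_7^{65} (basis X_1,...,X_6, Y_1; nonzero brackets [X_1,X_j] = X_{j+1} for j = 2,3,4,5; [X_3,X_2] = Y_1; [Y_1,X_3] = X_6; [Y_1,X_2] = X_5 + X_6) has characteristic sequence (5,1,1); that is, ad(X_1) has Jordan type (5,1,1), and no element X outside the derived algebra has a larger Jordan type for ad(X) in lexicographic order. -/

import Mathlib

open LieAlgebra Submodule Module

private lemma sumLie {L : Type*} [LieRing L] {ι : Type*} (s : Finset ι) (f : ι → L) (y : L) :
    ⁅∑ i ∈ s, f i, y⁆ = ∑ i ∈ s, ⁅f i, y⁆ := by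
  induction s using Finset.cons_induction with
  | empty => simp
  | cons a s ha ih => simp [Finset.sum_cons, add_lie, ih]

private lemma lieSum {L : Type*} [LieRing L] {ι : Type*} (s : Finset ι) (f : ι → L) (y : L) :
    ⁅y, ∑ i ∈ s, f i⁆ = ∑ i ∈ s, ⁅y, f i⁆ := by
  induction s using Finset.cons_induction with
  | empty => simp
  | cons a s ha ih => simp [Finset.sum_cons, lie_add, ih]

/-- The Lie algebra `g_7^{65}` has characteristic sequence `(5,1,1)`: `ad X_1` is
nilpotent with Jordan type `(5,1,1)` (i.e. `(ad X_1)^4 ≠ 0`, `(ad X_1)^5 = 0` and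
`rank (ad X_1) = 4`), and for no `X` outside the derived algebra is the Jordan type of
`ad X` lexicographically larger (i.e. always `(ad X)^5 = 0`, and `rank (ad X) ≤ 4`
whenever `(ad X)^4 ≠ 0`). -/
theorem g7_65_characteristic_sequence (g : Type*) [LieRing g] [LieAlgebra ℂ g]
    (b : Basis (Fin 7) ℂ g)
    (h01 : ⁅b 0, b 1⁆ = b 2) (h02 : ⁅b 0, b 2⁆ = b 3) (h03 : ⁅b 0, b 3⁆ = b 4)
    (h04 : ⁅b 0, b 4⁆ = b 5) (h05 : ⁅b 0, b 5⁆ = 0) (h06 : ⁅b 0, b 6⁆ = 0)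
    (h21 : ⁅b 2, b 1⁆ = b 6) (h61 : ⁅b 6, b 1⁆ = b 4 + b 5) (h62 : ⁅b 6, b 2⁆ = b 5)
    (h13 : ⁅b 1, b 3⁆ = 0) (h14 : ⁅b 1, b 4⁆ = 0) (h15 : ⁅b 1, b 5⁆ = 0)
    (h23 : ⁅b 2, b 3⁆ = 0) (h24 : ⁅b 2, b 4⁆ = 0) (h25 : ⁅b 2, b 5⁆ = 0)
    (h34 : ⁅b 3, b 4⁆ = 0) (h35 : ⁅b 3, b 5⁆ = 0) (h36 : ⁅b 3, b 6⁆ = 0)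
    (h45 : ⁅b 4, b 5⁆ = 0) (h46 : ⁅b 4, b 6⁆ = 0) (h56 : ⁅b 5, b 6⁆ = 0) :
    ((LieAlgebra.ad ℂ g (b 0)) ^ 4 ≠ 0 ∧ (LieAlgebra.ad ℂ g (b 0)) ^ 5 = 0 ∧
      Module.finrank ℂ (LinearMap.range (LieAlgebra.ad ℂ g (b 0))) = 4) ∧
    (b 0 ∉ LieAlgebra.derivedSeries ℂ g 1) ∧
    (∀ X : g, X ∉ LieAlgebra.derivedSeries ℂ g 1 →
      (LieAlgebra.ad ℂ g X) ^ 5 = 0 ∧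
        ((LieAlgebra.ad ℂ g X) ^ 4 ≠ 0 →
          Module.finrank ℂ (LinearMap.range (LieAlgebra.ad ℂ g X)) ≤ 4)) := by
  haveI : FiniteDimensional ℂ g := Module.Finite.of_basis b
  -- diagonal brackets
  have h00 : ⁅b 0, b 0⁆ = 0 := lie_self _
  have h11 : ⁅b 1, b 1⁆ = 0 := lie_self _
  have h22 : ⁅b 2, b 2⁆ = 0 := lie_self _
  have h33 : ⁅b 3, b 3⁆ = 0 := lie_self _
  have h44 : ⁅b 4, b 4⁆ = 0 := lie_self _
  have h55 : ⁅b 5, b 5⁆ = 0 := lie_self _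
  have h66 : ⁅b 6, b 6⁆ = 0 := lie_self _
  -- skew-symmetric counterparts
  have h10 : ⁅b 1, b 0⁆ = -b 2 := by rw [← lie_skew, h01]
  have h20 : ⁅b 2, b 0⁆ = -b 3 := by rw [← lie_skew, h02]
  have h30 : ⁅b 3, b 0⁆ = -b 4 := by rw [← lie_skew, h03]
  have h40 : ⁅b 4, b 0⁆ = -b 5 := by rw [← lie_skew, h04]
  have h50 : ⁅b 5, b 0⁆ = 0 := by rw [← lie_skew, h05, neg_zero]
  have h60 : ⁅b 6, b 0⁆ = 0 := by rw [← lie_skew, h06, neg_zero]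
  have h12 : ⁅b 1, b 2⁆ = -b 6 := by rw [← lie_skew, h21]
  have h16 : ⁅b 1, b 6⁆ = -(b 4 + b 5) := by rw [← lie_skew, h61]
  have h26 : ⁅b 2, b 6⁆ = -b 5 := by rw [← lie_skew, h62]
  have h31 : ⁅b 3, b 1⁆ = 0 := by rw [← lie_skew, h13, neg_zero]
  have h41 : ⁅b 4, b 1⁆ = 0 := by rw [← lie_skew, h14, neg_zero]
  have h51 : ⁅b 5, b 1⁆ = 0 := by rw [← lie_skew, h15, neg_zero]
  have h32 : ⁅b 3, b 2⁆ = 0 := by rw [← lie_skew, h23, neg_zero]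
  have h42 : ⁅b 4, b 2⁆ = 0 := by rw [← lie_skew, h24, neg_zero]
  have h52 : ⁅b 5, b 2⁆ = 0 := by rw [← lie_skew, h25, neg_zero]
  have h43 : ⁅b 4, b 3⁆ = 0 := by rw [← lie_skew, h34, neg_zero]
  have h53 : ⁅b 5, b 3⁆ = 0 := by rw [← lie_skew, h35, neg_zero]
  have h63 : ⁅b 6, b 3⁆ = 0 := by rw [← lie_skew, h36, neg_zero]
  have h54 : ⁅b 5, b 4⁆ = 0 := by rw [← lie_skew, h45, neg_zero]
  have h64 : ⁅b 6, b 4⁆ = 0 := by rw [← lie_skew, h46, neg_zero]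
  have h65 : ⁅b 6, b 5⁆ = 0 := by rw [← lie_skew, h56, neg_zero]
  -- the span of b 2, …, b 6
  set S2 : Submodule ℂ g := span ℂ ({b 2, b 3, b 4, b 5, b 6} : Set g) with hS2
  have m2 : b 2 ∈ S2 := subset_span (by simp)
  have m3 : b 3 ∈ S2 := subset_span (by simp)
  have m4 : b 4 ∈ S2 := subset_span (by simp)
  have m5 : b 5 ∈ S2 := subset_span (by simp)
  have m6 : b 6 ∈ S2 := subset_span (by simp)
  have Htable : ∀ i j : Fin 7, ⁅b i, b j⁆ ∈ S2 := by
    intro i j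
    fin_cases i <;> fin_cases j <;>
      simp only [Fin.zero_eta, Fin.mk_one, show (⟨2,by omega⟩:Fin 7) = 2 from rfl,
        show (⟨3,by omega⟩:Fin 7) = 3 from rfl, show (⟨4,by omega⟩:Fin 7) = 4 from rfl,
        show (⟨5,by omega⟩:Fin 7) = 5 from rfl, show (⟨6,by omega⟩:Fin 7) = 6 from rfl,
        h00, h01, h02, h03, h04, h05, h06, h10, h11, h12, h13, h14, h15,
        h16, h20, h21, h22, h23, h24, h25, h26, h30, h31, h32, h33, h34, h35, h36, h40, h41,
        h42, h43, h44, h45, h46, h50, h51, h52, h53, h54, h55, h56, h60, h61, h62, h63, h64,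
        h65, h66] <;>
      first
        | exact S2.zero_mem
        | exact m2 | exact m3 | exact m4 | exact m5 | exact m6
        | exact S2.neg_mem m2 | exact S2.neg_mem m3 | exact S2.neg_mem m4
        | exact S2.neg_mem m5 | exact S2.neg_mem m6
        | exact S2.add_mem m4 m5
        | exact S2.neg_mem (S2.add_mem m4 m5)
  have Hyz : ∀ y z : g, ⁅y, z⁆ ∈ S2 := by
    intro y z
    rw [← b.sum_repr y, sumLie]
    refine Submodule.sum_mem _ fun i _ => ?_
    rw [smul_lie]
    refine S2.smul_mem _ ?_
    rw [← b.sum_repr z, lieSum]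
    refine Submodule.sum_mem _ fun j _ => ?_
    rw [lie_smul]
    exact S2.smul_mem _ (Htable i j)
  -- the Lie ideal with carrier S2
  let K : LieIdeal ℂ g := { S2 with lie_mem := fun {x m} _ => Hyz x m }
  have hderK : LieAlgebra.derivedSeries ℂ g 1 ≤ K := by
    rw [LieAlgebra.derivedSeries_def, LieAlgebra.derivedSeriesOfIdeal_succ,
      LieAlgebra.derivedSeriesOfIdeal_zero, LieSubmodule.lie_le_iff]
    exact fun x _ m _ => Hyz x m
  have hcoord : ∀ v ∈ S2, b.repr v 0 = 0 ∧ b.repr v 1 = 0 := by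
    intro v hv
    induction hv using Submodule.span_induction with
    | mem x hx =>
        simp only [Set.mem_insert_iff, Set.mem_singleton_iff] at hx
        rcases hx with rfl | rfl | rfl | rfl | rfl <;>
          simp [Basis.repr_self, Finsupp.single_apply]
    | zero => simp
    | add x y _ _ hx hy => simp [hx.1, hx.2, hy.1, hy.2]
    | smul c x _ hx => simp [hx.1, hx.2]
  -- basis vectors 2..6 lie in the derived series
  have hder_eq : LieAlgebra.derivedSeries ℂ g 1 = ⁅(⊤ : LieIdeal ℂ g), (⊤ : LieIdeal ℂ g)⁆ := by
    rw [LieAlgebra.derivedSeries_def, LieAlgebra.derivedSeriesOfIdeal_succ,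
      LieAlgebra.derivedSeriesOfIdeal_zero]
  have d2 : b 2 ∈ LieAlgebra.derivedSeries ℂ g 1 := by
    rw [hder_eq]
    exact h01 ▸ LieSubmodule.lie_mem_lie (LieSubmodule.mem_top _) (LieSubmodule.mem_top _)
  have d3 : b 3 ∈ LieAlgebra.derivedSeries ℂ g 1 := by
    rw [hder_eq]
    exact h02 ▸ LieSubmodule.lie_mem_lie (LieSubmodule.mem_top _) (LieSubmodule.mem_top _)
  have d4 : b 4 ∈ LieAlgebra.derivedSeries ℂ g 1 := by
    rw [hder_eq]
    exact h03 ▸ LieSubmodule.lie_mem_lie (LieSubmodule.mem_top _) (LieSubmodule.mem_top _)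
  have d5 : b 5 ∈ LieAlgebra.derivedSeries ℂ g 1 := by
    rw [hder_eq]
    exact h04 ▸ LieSubmodule.lie_mem_lie (LieSubmodule.mem_top _) (LieSubmodule.mem_top _)
  have d6 : b 6 ∈ LieAlgebra.derivedSeries ℂ g 1 := by
    rw [hder_eq]
    exact h21 ▸ LieSubmodule.lie_mem_lie (LieSubmodule.mem_top _) (LieSubmodule.mem_top _)
  refine ⟨⟨?_, ?_, ?_⟩, ?_, ?_⟩
  · -- (ad b0)^4 ≠ 0
    intro h
    have h5 : ((ad ℂ g (b 0)) ^ 4) (b 1) = b 5 := by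
      simp only [pow_succ, pow_zero, Module.End.mul_apply, Module.End.one_apply, ad_apply,
        h01, h02, h03, h04]
    rw [h, LinearMap.zero_apply] at h5
    exact b.ne_zero 5 h5.symm
  · -- (ad b0)^5 = 0
    refine b.ext fun i => ?_
    fin_cases i <;>
      simp only [Fin.zero_eta, Fin.mk_one, show (⟨2,by omega⟩:Fin 7) = 2 from rfl,
        show (⟨3,by omega⟩:Fin 7) = 3 from rfl, show (⟨4,by omega⟩:Fin 7) = 4 from rfl,
        show (⟨5,by omega⟩:Fin 7) = 5 from rfl, show (⟨6,by omega⟩:Fin 7) = 6 from rfl,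
        pow_succ, pow_zero, Module.End.mul_apply, Module.End.one_apply,
        ad_apply, LinearMap.zero_apply, h00, h01, h02, h03, h04, h05, h06, lie_zero]
  · -- rank (ad b0) = 4
    have hrange : LinearMap.range (ad ℂ g (b 0)) =
        span ℂ (Set.range fun i : Fin 7 => ⁅b 0, b i⁆) := by
      conv_lhs => rw [LinearMap.range_eq_map, ← b.span_eq, Submodule.map_span, ← Set.range_comp]
      rfl
    have hv : LinearIndependent ℂ (b ∘ ![2, 3, 4, 5]) :=
      b.linearIndependent.comp ![2, 3, 4, 5] (by decide)
    have heq : span ℂ (Set.range fun i : Fin 7 => ⁅b 0, b i⁆) =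
        span ℂ (Set.range (b ∘ ![(2:Fin 7), 3, 4, 5])) := by
      apply le_antisymm <;> rw [span_le] <;> rintro _ ⟨i, rfl⟩
      · fin_cases i <;>
          simp only [Fin.zero_eta, Fin.mk_one, show (⟨2,by omega⟩:Fin 7) = 2 from rfl,
            show (⟨3,by omega⟩:Fin 7) = 3 from rfl, show (⟨4,by omega⟩:Fin 7) = 4 from rfl,
            show (⟨5,by omega⟩:Fin 7) = 5 from rfl, show (⟨6,by omega⟩:Fin 7) = 6 from rfl,
            h00, h01, h02, h03, h04, h05, h06] <;>
          first
            | exact zero_mem _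
            | exact subset_span ⟨0, rfl⟩ | exact subset_span ⟨1, rfl⟩
            | exact subset_span ⟨2, rfl⟩ | exact subset_span ⟨3, rfl⟩
      · fin_cases i <;>
          simp only [Function.comp, Matrix.cons_val_zero, Matrix.cons_val_one, Matrix.head_cons,
            Fin.zero_eta, Fin.mk_one, show (⟨2,by omega⟩:Fin 4) = 2 from rfl,
            show (⟨3,by omega⟩:Fin 4) = 3 from rfl]
        · exact subset_span ⟨1, by simpa using h01⟩
        · exact subset_span ⟨2, by simpa using h02⟩
        · exact subset_span ⟨3, by simpa using h03⟩
        · exact subset_span ⟨4, by simpa using h04⟩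
    rw [hrange, heq, finrank_span_eq_card hv]
    rfl
  · -- b 0 ∉ derived
    intro h
    have h0 := (hcoord (b 0) (hderK h)).1
    simp [Basis.repr_self] at h0
  · -- general X outside the derived algebra
    intro X hX
    set x : Fin 7 → ℂ := fun i => b.repr X i with hx
    have hXs : (∑ i, x i • b i) = X := b.sum_repr X
    have L : ∀ j : Fin 7, ⁅X, b j⁆ = ∑ i, x i • ⁅b i, b j⁆ := by
      intro j; conv_lhs => rw [← hXs, sumLie]
      exact Finset.sum_congr rfl fun i _ => smul_lie _ _ _
    have L0 : ⁅X, b 0⁆ = -(x 1 • b 2) - x 2 • b 3 - x 3 • b 4 - x 4 • b 5 := by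
      rw [L 0, Fin.sum_univ_seven, h00, h10, h20, h30, h40, h50, h60]; module
    have L1 : ⁅X, b 1⁆ = x 0 • b 2 + x 6 • b 4 + x 6 • b 5 + x 2 • b 6 := by
      rw [L 1, Fin.sum_univ_seven, h01, h11, h21, h31, h41, h51, h61]; module
    have L2 : ⁅X, b 2⁆ = x 0 • b 3 + x 6 • b 5 - x 1 • b 6 := by
      rw [L 2, Fin.sum_univ_seven, h02, h12, h22, h32, h42, h52, h62]; module
    have L3 : ⁅X, b 3⁆ = x 0 • b 4 := by
      rw [L 3, Fin.sum_univ_seven, h03, h13, h23, h33, h43, h53, h63]; module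
    have L4 : ⁅X, b 4⁆ = x 0 • b 5 := by
      rw [L 4, Fin.sum_univ_seven, h04, h14, h24, h34, h44, h54, h64]; module
    have L5 : ⁅X, b 5⁆ = 0 := by
      rw [L 5, Fin.sum_univ_seven, h05, h15, h25, h35, h45, h55, h65]; module
    have L6 : ⁅X, b 6⁆ = -(x 1 • b 4) - x 1 • b 5 - x 2 • b 5 := by
      rw [L 6, Fin.sum_univ_seven, h06, h16, h26, h36, h46, h56, h66]; module
    constructor
    · -- (ad X)^5 = 0
      refine b.ext fun i => ?_
      have key : ∀ j : Fin 7, ((ad ℂ g X) ^ 5) (b j) = ⁅X, ⁅X, ⁅X, ⁅X, ⁅X, b j⁆⁆⁆⁆⁆ := by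
        intro j
        simp only [pow_succ, pow_zero, Module.End.mul_apply, Module.End.one_apply, ad_apply]
      rw [LinearMap.zero_apply]
      fin_cases i <;>
        rw [key] <;>
        simp only [Fin.zero_eta, Fin.mk_one, show (⟨2,by omega⟩:Fin 7) = 2 from rfl,
          show (⟨3,by omega⟩:Fin 7) = 3 from rfl, show (⟨4,by omega⟩:Fin 7) = 4 from rfl,
          show (⟨5,by omega⟩:Fin 7) = 5 from rfl, show (⟨6,by omega⟩:Fin 7) = 6 from rfl,
          L0, L1, L2, L3, L4, L5, L6, lie_add, lie_sub, lie_neg, lie_smul, lie_zero,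
          smul_add, smul_sub, smul_neg, smul_zero, smul_smul, add_zero, zero_add, sub_zero,
          zero_sub, neg_zero, neg_neg]
    · -- rank (ad X) ≤ 4
      intro _
      -- X outside derived means x 0 ≠ 0 or x 1 ≠ 0
      have hx01 : x 0 ≠ 0 ∨ x 1 ≠ 0 := by
        by_contra hcon
        push_neg at hcon
        apply hX
        rw [← hXs, Fin.sum_univ_seven, hcon.1, hcon.2, zero_smul, zero_smul, zero_add,
          zero_add]
        exact add_mem (add_mem (add_mem (add_mem (SMulMemClass.smul_mem _ d2)
          (SMulMemClass.smul_mem _ d3)) (SMulMemClass.smul_mem _ d4))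
          (SMulMemClass.smul_mem _ d5)) (SMulMemClass.smul_mem _ d6)
      have hrange : LinearMap.range (ad ℂ g X) =
          span ℂ (Set.range fun i : Fin 7 => ⁅X, b i⁆) := by
        conv_lhs => rw [LinearMap.range_eq_map, ← b.span_eq, Submodule.map_span, ← Set.range_comp]
        rfl
      have hrel : x 0 • ⁅X, b 0⁆ + x 1 • ⁅X, b 1⁆ + x 2 • ⁅X, b 2⁆ =
          (x 1 * x 6 - x 0 * x 3) • b 4 + ((x 1 + x 2) * x 6 - x 0 * x 4) • b 5 := by
        rw [L0, L1, L2]; module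
      rcases hx01 with hx0 | hx1
      · set U : Submodule ℂ g := span ℂ (Set.range ![⁅X, b 1⁆, ⁅X, b 2⁆, b 4, b 5]) with hU
        have u1 : ⁅X, b 1⁆ ∈ U := subset_span (by simp [Matrix.range_cons, Matrix.range_empty])
        have u2 : ⁅X, b 2⁆ ∈ U := subset_span (by simp [Matrix.range_cons, Matrix.range_empty])
        have u4 : (b 4) ∈ U := subset_span (by simp [Matrix.range_cons, Matrix.range_empty])
        have u5 : (b 5) ∈ U := subset_span (by simp [Matrix.range_cons, Matrix.range_empty])
        have u0 : ⁅X, b 0⁆ ∈ U := by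
          have e : ⁅X, b 0⁆ = (x 0)⁻¹ • (x 0 • ⁅X, b 0⁆) := by
            rw [smul_smul, inv_mul_cancel₀ hx0, one_smul]
          have e2 : x 0 • ⁅X, b 0⁆ =
              (x 1 * x 6 - x 0 * x 3) • b 4 + ((x 1 + x 2) * x 6 - x 0 * x 4) • b 5
                - x 1 • ⁅X, b 1⁆ - x 2 • ⁅X, b 2⁆ := by
            rw [← hrel]; module
          rw [e, e2]
          exact U.smul_mem _ (sub_mem (sub_mem (add_mem (U.smul_mem _ u4) (U.smul_mem _ u5))
            (U.smul_mem _ u1)) (U.smul_mem _ u2))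
        have hle : LinearMap.range (ad ℂ g X) ≤ U := by
          rw [hrange, span_le]
          rintro _ ⟨i, rfl⟩
          fin_cases i <;>
            simp only [Fin.zero_eta, Fin.mk_one, show (⟨2,by omega⟩:Fin 7) = 2 from rfl,
              show (⟨3,by omega⟩:Fin 7) = 3 from rfl, show (⟨4,by omega⟩:Fin 7) = 4 from rfl,
              show (⟨5,by omega⟩:Fin 7) = 5 from rfl, show (⟨6,by omega⟩:Fin 7) = 6 from rfl]
          · exact u0
          · exact u1
          · exact u2
          · rw [L3]; exact U.smul_mem _ u4
          · rw [L4]; exact U.smul_mem _ u5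
          · rw [L5]; exact U.zero_mem
          · rw [L6]
            exact sub_mem (sub_mem (neg_mem (U.smul_mem _ u4)) (U.smul_mem _ u5))
              (U.smul_mem _ u5)
        have hUle : finrank ℂ U ≤ 4 := by
          simpa [Set.finrank] using
            finrank_range_le_card (R := ℂ) ![⁅X, b 1⁆, ⁅X, b 2⁆, b 4, b 5]
        exact le_trans (Submodule.finrank_mono hle) hUle
      · set U : Submodule ℂ g := span ℂ (Set.range ![⁅X, b 0⁆, ⁅X, b 2⁆, b 4, b 5]) with hU
        have u0 : ⁅X, b 0⁆ ∈ U := subset_span (by simp [Matrix.range_cons, Matrix.range_empty])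
        have u2 : ⁅X, b 2⁆ ∈ U := subset_span (by simp [Matrix.range_cons, Matrix.range_empty])
        have u4 : (b 4) ∈ U := subset_span (by simp [Matrix.range_cons, Matrix.range_empty])
        have u5 : (b 5) ∈ U := subset_span (by simp [Matrix.range_cons, Matrix.range_empty])
        have u1 : ⁅X, b 1⁆ ∈ U := by
          have e : ⁅X, b 1⁆ = (x 1)⁻¹ • (x 1 • ⁅X, b 1⁆) := by
            rw [smul_smul, inv_mul_cancel₀ hx1, one_smul]
          have e2 : x 1 • ⁅X, b 1⁆ =
              (x 1 * x 6 - x 0 * x 3) • b 4 + ((x 1 + x 2) * x 6 - x 0 * x 4) • b 5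
                - x 0 • ⁅X, b 0⁆ - x 2 • ⁅X, b 2⁆ := by
            rw [← hrel]; module
          rw [e, e2]
          exact U.smul_mem _ (sub_mem (sub_mem (add_mem (U.smul_mem _ u4) (U.smul_mem _ u5))
            (U.smul_mem _ u0)) (U.smul_mem _ u2))
        have hle : LinearMap.range (ad ℂ g X) ≤ U := by
          rw [hrange, span_le]
          rintro _ ⟨i, rfl⟩
          fin_cases i <;>
            simp only [Fin.zero_eta, Fin.mk_one, show (⟨2,by omega⟩:Fin 7) = 2 from rfl,
              show (⟨3,by omega⟩:Fin 7) = 3 from rfl, show (⟨4,by omega⟩:Fin 7) = 4 from rfl,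
              show (⟨5,by omega⟩:Fin 7) = 5 from rfl, show (⟨6,by omega⟩:Fin 7) = 6 from rfl]
          · exact u0
          · exact u1
          · exact u2
          · rw [L3]; exact U.smul_mem _ u4
          · rw [L4]; exact U.smul_mem _ u5
          · rw [L5]; exact U.zero_mem
          · rw [L6]
            exact sub_mem (sub_mem (neg_mem (U.smul_mem _ u4)) (U.smul_mem _ u5))
              (U.smul_mem _ u5)
        have hUle : finrank ℂ U ≤ 4 := by
          simpa [Set.finrank] using
            finrank_range_le_card (R := ℂ) ![⁅X, b 0⁆, ⁅X, b 2⁆, b 4, b 5]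
        exact le_trans (Submodule.finrank_mono hle) hUle
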